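/- Let d ≥ 3, let μ be any probability measure on [0,1]^d ⊂ ℝ^d and let (X_k)_{k≥1} be i.i.d. random variables with law μ. Then for every n ≥ 1, E[W_1(μ̂_n, μ)] ≤ C_d · n^{−1/d}, where one may take C_3 = 6.3 when d = 3 and C_d = 3√d for all d ≥ 4. -/

import Mathlib

open MeasureTheory ProbabilityTheory
open scoped ENNReal

noncomputable section

/-- The empirical measure `μ̂_n = (1/n) ∑_{k=1}^n δ_{X_k}` of a process. -/
def empMeasure {Ω E : Type*} [MeasurableSpace Ω] [MeasurableSpace E]
    (X : ℕ → Ω → E) (n : ℕ) (ω : Ω) : Measure E :=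
  (n : ℝ≥0∞)⁻¹ • ∑ k ∈ Finset.Icc 1 n, Measure.dirac (X k ω)

/-- The 1-Wasserstein distance, in duality with 1-Lipschitz functions. -/
def W1 {E : Type*} [MeasurableSpace E] [PseudoMetricSpace E] (ν₀ ν₁ : Measure E) : ℝ :=
  ⨆ f : {f : E → ℝ // LipschitzWith 1 f}, |∫ x, f.1 x ∂ν₀ - ∫ x, f.1 x ∂ν₁|

/-- The unit cube `[0,1]^d` in Euclidean space. -/
def unitCube (d : ℕ) : Set (EuclideanSpace ℝ (Fin d)) :=
  {x | ∀ i, x i ∈ Set.Icc (0:ℝ) 1}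

namespace EmpW1

/-- index of the dyadic cell at level `l` containing `t` (clamped). -/
def idx (l : ℕ) (t : ℝ) : ℕ := min ⌊(2:ℝ)^l * t⌋₊ (2^l - 1)

lemma idx_lt (l : ℕ) (t : ℝ) : idx l t < 2^l := by
  have h : 0 < (2:ℕ)^l := Nat.pow_pos (by norm_num)
  exact lt_of_le_of_lt (min_le_right _ _) (by omega)

lemma idx_succ (l : ℕ) (t : ℝ) : idx l t = idx (l+1) t / 2 := by
  unfold idx
  have h : (2:ℝ)^l * t = ((2:ℝ)^(l+1) * t) / (2:ℕ) := by
    push_cast; ring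
  rw [h, Nat.floor_div_natCast]
  have h2 : (2:ℕ)^(l+1) = 2 * 2^l := by ring
  omega

lemma idx_bounds (l : ℕ) {t : ℝ} (h0 : 0 ≤ t) (h1 : t ≤ 1) :
    (idx l t : ℝ) / 2^l ≤ t ∧ t ≤ ((idx l t : ℝ) + 1) / 2^l := by
  have hp : (0:ℝ) < 2^l := by positivity
  by_cases hc : ⌊(2:ℝ)^l * t⌋₊ ≤ 2^l - 1
  · rw [idx, min_eq_left hc]
    constructor
    · rw [div_le_iff₀ hp, mul_comm]
      exact Nat.floor_le (by positivity)
    · rw [le_div_iff₀ hp, mul_comm]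
      exact_mod_cast (Nat.lt_floor_add_one ((2:ℝ)^l * t)).le
  · have hn : (2:ℕ)^l ≤ ⌊(2:ℝ)^l * t⌋₊ := by
      have h : 0 < (2:ℕ)^l := Nat.pow_pos (by norm_num)
      omega
    rw [idx, min_eq_right (by omega)]
    have hcast : ((2^l - 1 : ℕ) : ℝ) = 2^l - 1 := by
      have h : 1 ≤ (2:ℕ)^l := Nat.one_le_two_pow
      push_cast [Nat.cast_sub h]; norm_num
    rw [hcast]
    have ht1 : (2:ℝ)^l ≤ 2^l * t := by
      calc (2:ℝ)^l = ((2^l : ℕ) : ℝ) := by push_cast; ring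
      _ ≤ (⌊(2:ℝ)^l * t⌋₊ : ℝ) := by exact_mod_cast hn
      _ ≤ 2^l * t := Nat.floor_le (by positivity)
    have : (1:ℝ) ≤ t := by nlinarith
    have ht : t = 1 := le_antisymm h1 this
    constructor
    · rw [ht, div_le_one hp]; linarith
    · rw [ht, le_div_iff₀ hp]; linarith

/-- coordinate distance to center of cell -/
lemma idx_center (l : ℕ) {t : ℝ} (h0 : 0 ≤ t) (h1 : t ≤ 1) :
    |t - ((idx l t : ℝ) + 1/2) / 2^l| ≤ 1 / 2^(l+1) := by
  obtain ⟨hl, hr⟩ := idx_bounds l h0 h1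
  have hp : (0:ℝ) < 2^l := by positivity
  have h2 : (2:ℝ)^(l+1) = 2 * 2^l := by ring
  have e1 : ((idx l t:ℝ) + 1/2)/2^l = (idx l t:ℝ)/2^l + 1/2^(l+1) := by
    rw [h2]; field_simp
  have e2 : ((idx l t:ℝ) + 1)/2^l = (idx l t:ℝ)/2^l + 2/2^(l+1) := by
    rw [h2]; field_simp
  have hhalf : (2:ℝ)/2^(l+1) = 1/2^(l+1) + 1/2^(l+1) := by ring
  rw [e2, hhalf] at hr
  rw [e1, abs_le]
  constructor <;> linarith

variable {d : ℕ}

def idxV (d l : ℕ) (x : EuclideanSpace ℝ (Fin d)) : Fin d → Fin (2^l) :=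
  fun i => ⟨idx l (x i), idx_lt l (x i)⟩

def cell (d l : ℕ) (j : Fin d → Fin (2^l)) : Set (EuclideanSpace ℝ (Fin d)) :=
  {x | idxV d l x = j}

def ctr (d l : ℕ) (j : Fin d → Fin (2^l)) : EuclideanSpace ℝ (Fin d) :=
  WithLp.toLp 2 (fun i => ((j i : ℝ) + 1/2) / 2^l)

def par (d l : ℕ) (j : Fin d → Fin (2^(l+1))) : Fin d → Fin (2^l) :=
  fun i => ⟨(j i : ℕ) / 2, by
    have h : (j i : ℕ) < 2^(l+1) := (j i).2
    have h2 : (2:ℕ)^(l+1) = 2 * 2^l := by ring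
    omega⟩

lemma idxV_par (l : ℕ) (x : EuclideanSpace ℝ (Fin d)) :
    idxV d l x = par d l (idxV d (l+1) x) := by
  funext i
  exact Fin.ext (idx_succ l (x i))

/-- generic euclidean distance bound from coordinatewise bounds -/
lemma dist_le_of_coord (x y : EuclideanSpace ℝ (Fin d)) {c : ℝ} (hc : 0 ≤ c)
    (h : ∀ i, |x i - y i| ≤ c) : dist x y ≤ Real.sqrt d * c := by
  rw [EuclideanSpace.dist_eq]
  have : ∑ i, dist (x i) (y i) ^ 2 ≤ (d : ℝ) * c^2 := by
    calc ∑ i, dist (x i) (y i) ^ 2 ≤ ∑ _i : Fin d, c^2 := by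
          apply Finset.sum_le_sum
          intro i _
          rw [Real.dist_eq]
          exact pow_le_pow_left₀ (abs_nonneg _) (h i) 2
      _ = (d : ℝ) * c^2 := by
          rw [Finset.sum_const, Finset.card_univ, Fintype.card_fin, nsmul_eq_mul]
  calc Real.sqrt (∑ i, dist (x i) (y i) ^ 2) ≤ Real.sqrt ((d:ℝ) * c^2) := Real.sqrt_le_sqrt this
    _ = Real.sqrt d * c := by
        rw [Real.sqrt_mul (Nat.cast_nonneg d), Real.sqrt_sq hc]

lemma dist_ctr (l : ℕ) {x : EuclideanSpace ℝ (Fin d)} (hx : x ∈ unitCube d) :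
    dist x (ctr d l (idxV d l x)) ≤ Real.sqrt d / 2^(l+1) := by
  have := dist_le_of_coord x (ctr d l (idxV d l x)) (by positivity : (0:ℝ) ≤ 1/2^(l+1))
    (fun i => by
      have h := idx_center l (hx i).1 (hx i).2
      simpa [ctr, idxV] using h)
  calc dist x (ctr d l (idxV d l x)) ≤ Real.sqrt d * (1/2^(l+1)) := this
    _ = Real.sqrt d / 2^(l+1) := by ring

lemma dist_ctr_par (l : ℕ) (j : Fin d → Fin (2^(l+1))) :
    dist (ctr d (l+1) j) (ctr d l (par d l j)) ≤ Real.sqrt d / 2^(l+2) := by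
  have := dist_le_of_coord (ctr d (l+1) j) (ctr d l (par d l j))
    (by positivity : (0:ℝ) ≤ 1/2^(l+2))
    (fun i => by
      show |((j i : ℝ) + 1/2) / 2^(l+1) - (((par d l j i : ℕ) : ℝ) + 1/2) / 2^l| ≤ 1/2^(l+2)
      have hpar : (par d l j i : ℕ) = (j i : ℕ) / 2 := rfl
      set k := (j i : ℕ)
      have hk : k = 2 * (k / 2) + k % 2 := (Nat.div_add_mod k 2).symm ▸ by omega
      have hmod : k % 2 = 0 ∨ k % 2 = 1 := Nat.mod_two_eq_zero_or_one k
      have heq : ((k : ℝ) + 1/2) / 2^(l+1) - (((k/2 : ℕ) : ℝ) + 1/2) / 2^l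
          = ((k:ℝ) - 2*((k/2 : ℕ):ℝ) - 1/2) / 2^(l+1) := by
        have h2 : (2:ℝ)^(l+1) = 2 * 2^l := by ring
        field_simp
        ring
      rw [hpar, heq]
      have hnum : |(k:ℝ) - 2*((k/2 : ℕ):ℝ) - 1/2| ≤ 1/2 := by
        rcases hmod with h | h
        · have : (k:ℝ) = 2*((k/2:ℕ):ℝ) := by exact_mod_cast congrArg (Nat.cast (R := ℝ)) (by omega : k = 2*(k/2))
          rw [this]; rw [abs_le]; constructor <;> nlinarith
        · have : (k:ℝ) = 2*((k/2:ℕ):ℝ) + 1 := by exact_mod_cast congrArg (Nat.cast (R := ℝ)) (by omega : k = 2*(k/2) + 1)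
          rw [this]; rw [abs_le]; constructor <;> nlinarith
      rw [abs_div, abs_of_pos (by positivity : (0:ℝ) < 2^(l+1))]
      rw [div_le_div_iff₀ (by positivity) (by positivity)]
      have h4 : (2:ℝ)^(l+2) = 2 * 2^(l+1) := by ring
      nlinarith [hnum, (by positivity : (0:ℝ) < 2^(l+1))])
  calc dist (ctr d (l+1) j) (ctr d l (par d l j)) ≤ Real.sqrt d * (1/2^(l+2)) := this
    _ = Real.sqrt d / 2^(l+2) := by ring


lemma measurable_idx (l : ℕ) : Measurable (idx l) :=
  (Nat.measurable_floor.comp (measurable_id.const_mul _)).min measurable_const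

lemma measurableSet_cell (l : ℕ) (j : Fin d → Fin (2^l)) : MeasurableSet (cell d l j) := by
  have h : cell d l j = ⋂ i, (fun x : EuclideanSpace ℝ (Fin d) => x i) ⁻¹' (idx l ⁻¹' {(j i : ℕ)}) := by
    ext x
    simp only [cell, Set.mem_iInter, Set.mem_preimage, Set.mem_singleton_iff, Set.mem_setOf_eq]
    constructor
    · intro h i; rw [← h]; rfl
    · intro h; funext i; exact Fin.ext (h i)
  rw [h]
  exact MeasurableSet.iInter fun i =>
    ((measurable_pi_apply i).comp (WithLp.measurable_ofLp 2 _)) ((measurable_idx l) (measurableSet_singleton _))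

lemma measurableSet_unitCube : MeasurableSet (unitCube d) := by
  have h : unitCube d = ⋂ i, (fun x : EuclideanSpace ℝ (Fin d) => x i) ⁻¹' (Set.Icc 0 1) := by
    ext x; simp [unitCube]
  rw [h]
  exact MeasurableSet.iInter fun i => ((measurable_pi_apply i).comp (WithLp.measurable_ofLp 2 _)) measurableSet_Icc

lemma iUnion_cell (l : ℕ) : (⋃ j, cell d l j) = Set.univ :=
  Set.eq_univ_iff_forall.mpr fun x => Set.mem_iUnion.mpr ⟨idxV d l x, rfl⟩

lemma pairwise_cell (l : ℕ) : Pairwise (Function.onFun Disjoint (cell d l)) := by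
  intro j j' hjj'
  rw [Function.onFun, Set.disjoint_left]
  intro x hx hx'
  exact hjj' ((hx : idxV d l x = j).symm.trans hx')

lemma sum_cell_eq_one (ν : Measure (EuclideanSpace ℝ (Fin d))) [IsProbabilityMeasure ν] (l : ℕ) :
    ∑ j : Fin d → Fin (2^l), ν (cell d l j) = 1 := by
  rw [← tsum_fintype (L := SummationFilter.unconditional _), ← measure_iUnion (pairwise_cell l) (fun j => measurableSet_cell l j),
    iUnion_cell, measure_univ]

lemma comp_idxV_eq_sum (l : ℕ) (g : (Fin d → Fin (2^l)) → ℝ) (x : EuclideanSpace ℝ (Fin d)) :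
    g (idxV d l x) = ∑ j : Fin d → Fin (2^l), (cell d l j).indicator (fun _ => g j) x := by
  rw [Finset.sum_eq_single (idxV d l x)]
  · rw [Set.indicator_of_mem (by exact rfl)]
  · intro j _ hj
    rw [Set.indicator_of_notMem]
    intro hx
    exact hj ((hx : idxV d l x = j).symm)
  · intro h; exact absurd (Finset.mem_univ _) h

lemma integrable_comp_idxV (ν : Measure (EuclideanSpace ℝ (Fin d))) [IsFiniteMeasure ν]
    (l : ℕ) (g : (Fin d → Fin (2^l)) → ℝ) :
    Integrable (fun x => g (idxV d l x)) ν := by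
  have h : (fun x => g (idxV d l x))
      = fun x => ∑ j : Fin d → Fin (2^l), (cell d l j).indicator (fun _ => g j) x :=
    funext (comp_idxV_eq_sum l g)
  rw [h]
  exact integrable_finset_sum _ (fun j _ => (integrable_const (g j)).indicator (measurableSet_cell l j))

lemma integral_comp_idxV (ν : Measure (EuclideanSpace ℝ (Fin d))) [IsFiniteMeasure ν]
    (l : ℕ) (g : (Fin d → Fin (2^l)) → ℝ) :
    ∫ x, g (idxV d l x) ∂ν = ∑ j : Fin d → Fin (2^l), g j * (ν (cell d l j)).toReal := by
  have h : (fun x => g (idxV d l x))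
      = fun x => ∑ j : Fin d → Fin (2^l), (cell d l j).indicator (fun _ => g j) x :=
    funext (comp_idxV_eq_sum l g)
  rw [h, integral_finset_sum _ (fun j _ => (integrable_const (g j)).indicator (measurableSet_cell l j))]
  refine Finset.sum_congr rfl fun j _ => ?_
  rw [integral_indicator_const _ (measurableSet_cell l j), smul_eq_mul, mul_comm, measureReal_def]


/-- level-`m` discrepancy between two measures -/
def Dfn (d : ℕ) (ν μ : Measure (EuclideanSpace ℝ (Fin d))) (m : ℕ) : ℝ :=
  ∑ j : Fin d → Fin (2^m), |(ν (cell d m j)).toReal - (μ (cell d m j)).toReal|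

/-- level-`l` approximation of `∫ f` -/
def Afn (d : ℕ) (f : EuclideanSpace ℝ (Fin d) → ℝ) (ρ : Measure (EuclideanSpace ℝ (Fin d)))
    (l : ℕ) : ℝ :=
  ∑ j : Fin d → Fin (2^l), f (ctr d l j) * (ρ (cell d l j)).toReal

lemma ae_mem_cube {ν : Measure (EuclideanSpace ℝ (Fin d))} [IsProbabilityMeasure ν]
    (hν : ν (unitCube d) = 1) : ∀ᵐ x ∂ν, x ∈ unitCube d := by
  rw [ae_iff]
  have h := measure_compl (μ := ν) measurableSet_unitCube (measure_ne_top ν _)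
  rw [hν, measure_univ] at h
  simp at h; exact h

lemma integrable_lipschitz (ν : Measure (EuclideanSpace ℝ (Fin d))) [IsProbabilityMeasure ν]
    (hν : ν (unitCube d) = 1) {f : EuclideanSpace ℝ (Fin d) → ℝ} (hf : LipschitzWith 1 f) :
    Integrable f ν := by
  apply (integrable_const (|f 0| + Real.sqrt d)).mono'
    hf.continuous.measurable.aestronglyMeasurable
  filter_upwards [ae_mem_cube hν] with x hx
  have h1 : dist (f x) (f 0) ≤ 1 * dist x 0 := hf.dist_le_mul x 0
  have h2 : dist x 0 ≤ Real.sqrt d * 1 := by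
    apply dist_le_of_coord x 0 zero_le_one
    intro i
    have h0 : (0 : EuclideanSpace ℝ (Fin d)) i = 0 := rfl
    rw [h0, sub_zero, abs_le]
    exact ⟨by linarith [(hx i).1], (hx i).2⟩
  have h3 : |f x - f 0| ≤ Real.sqrt d := by
    rw [← Real.dist_eq]; rw [mul_one] at h2; linarith
  calc ‖f x‖ = |f x - f 0 + f 0| := by norm_num
    _ ≤ |f x - f 0| + |f 0| := abs_add_le _ _
    _ ≤ |f 0| + Real.sqrt d := by linarith

lemma Afn_eq_integral (f : EuclideanSpace ℝ (Fin d) → ℝ)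
    (ρ : Measure (EuclideanSpace ℝ (Fin d))) [IsFiniteMeasure ρ] (l : ℕ) :
    Afn d f ρ l = ∫ x, f (ctr d l (idxV d l x)) ∂ρ :=
  (integral_comp_idxV ρ l (fun j => f (ctr d l j))).symm

lemma Afn_step (f : EuclideanSpace ℝ (Fin d) → ℝ)
    (ρ : Measure (EuclideanSpace ℝ (Fin d))) [IsFiniteMeasure ρ] (l : ℕ) :
    Afn d f ρ (l+1) - Afn d f ρ l
      = ∑ j : Fin d → Fin (2^(l+1)),
          (f (ctr d (l+1) j) - f (ctr d l (par d l j))) * (ρ (cell d (l+1) j)).toReal := by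
  have h1 : Afn d f ρ l
      = ∑ j : Fin d → Fin (2^(l+1)), f (ctr d l (par d l j)) * (ρ (cell d (l+1) j)).toReal := by
    rw [Afn_eq_integral]
    rw [show (fun x => f (ctr d l (idxV d l x)))
        = fun x => f (ctr d l (par d l (idxV d (l+1) x))) from
      funext fun x => by rw [idxV_par]]
    exact integral_comp_idxV ρ (l+1) (fun j => f (ctr d l (par d l j)))
  rw [h1, Afn, ← Finset.sum_sub_distrib]
  exact Finset.sum_congr rfl fun j _ => (sub_mul _ _ _).symm

lemma Afn_zero (f : EuclideanSpace ℝ (Fin d) → ℝ)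
    (ρ : Measure (EuclideanSpace ℝ (Fin d))) [IsProbabilityMeasure ρ] :
    Afn d f ρ 0 = ∑ j : Fin d → Fin (2^0), f (ctr d 0 j) := by
  unfold Afn
  refine Finset.sum_congr rfl fun j _ => ?_
  haveI hfin : Subsingleton (Fin (2^0)) :=
    ⟨fun a b => Fin.ext (by have ha := a.2; have hb := b.2; norm_num at ha hb; omega)⟩
  haveI : Subsingleton (Fin d → Fin (2^0)) := ⟨fun f g => funext fun i => Subsingleton.elim _ _⟩
  have hc : cell d 0 j = Set.univ :=
    Set.eq_univ_iff_forall.mpr fun x => Subsingleton.elim _ _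
  rw [hc, measure_univ, ENNReal.toReal_one, mul_one]

lemma Afn_approx (f : EuclideanSpace ℝ (Fin d) → ℝ) (hf : LipschitzWith 1 f)
    (ρ : Measure (EuclideanSpace ℝ (Fin d))) [IsProbabilityMeasure ρ]
    (hρ : ρ (unitCube d) = 1) (L : ℕ) :
    |∫ x, f x ∂ρ - Afn d f ρ L| ≤ Real.sqrt d / 2^(L+1) := by
  have hint : Integrable f ρ := integrable_lipschitz ρ hρ hf
  have hint2 : Integrable (fun x => f (ctr d L (idxV d L x))) ρ :=
    integrable_comp_idxV ρ L (fun j => f (ctr d L j))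
  rw [Afn_eq_integral, ← integral_sub hint hint2]
  have hb : ∀ᵐ x ∂ρ, ‖f x - f (ctr d L (idxV d L x))‖ ≤ Real.sqrt d / 2^(L+1) := by
    filter_upwards [ae_mem_cube hρ] with x hx
    have h1 : dist (f x) (f (ctr d L (idxV d L x))) ≤ 1 * dist x (ctr d L (idxV d L x)) :=
      hf.dist_le_mul _ _
    rw [one_mul] at h1
    calc ‖f x - f (ctr d L (idxV d L x))‖ = dist (f x) (f (ctr d L (idxV d L x))) :=
          (dist_eq_norm _ _).symm
      _ ≤ dist x (ctr d L (idxV d L x)) := h1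
      _ ≤ Real.sqrt d / 2^(L+1) := dist_ctr L hx
  have := norm_integral_le_of_norm_le_const hb
  rw [probReal_univ, mul_one] at this
  exact this

theorem det_bound (d : ℕ) (ν μ : Measure (EuclideanSpace ℝ (Fin d)))
    [IsProbabilityMeasure ν] [IsProbabilityMeasure μ]
    (hν : ν (unitCube d) = 1) (hμ : μ (unitCube d) = 1) (L : ℕ) :
    W1 ν μ ≤ Real.sqrt d * (1/2^L + ∑ l ∈ Finset.range L, 1/2^(l+2) * Dfn d ν μ (l+1)) := by
  haveI : Nonempty {f : EuclideanSpace ℝ (Fin d) → ℝ // LipschitzWith 1 f} :=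
    ⟨⟨fun _ => 0, LipschitzWith.const' 0⟩⟩
  apply ciSup_le
  rintro ⟨f, hf⟩
  simp only
  have htel : ∀ (ρ : Measure (EuclideanSpace ℝ (Fin d))),
      Afn d f ρ L - Afn d f ρ 0 = ∑ l ∈ Finset.range L, (Afn d f ρ (l+1) - Afn d f ρ l) :=
    fun ρ => (Finset.sum_range_sub (Afn d f ρ) L).symm
  have hzero : Afn d f ν 0 = Afn d f μ 0 := by rw [Afn_zero, Afn_zero]
  have hdecomp : ∫ x, f x ∂ν - ∫ x, f x ∂μ
      = (∫ x, f x ∂ν - Afn d f ν L) - (∫ x, f x ∂μ - Afn d f μ L)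
        + ∑ l ∈ Finset.range L,
            ((Afn d f ν (l+1) - Afn d f ν l) - (Afn d f μ (l+1) - Afn d f μ l)) := by
    rw [Finset.sum_sub_distrib, ← htel ν, ← htel μ, hzero]
    ring
  have hstepb : ∀ l, |(Afn d f ν (l+1) - Afn d f ν l) - (Afn d f μ (l+1) - Afn d f μ l)|
      ≤ Real.sqrt d / 2^(l+2) * Dfn d ν μ (l+1) := by
    intro l
    rw [Afn_step, Afn_step, ← Finset.sum_sub_distrib]
    have heq : ∀ j : Fin d → Fin (2^(l+1)),
        (f (ctr d (l+1) j) - f (ctr d l (par d l j))) * (ν (cell d (l+1) j)).toReal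
          - (f (ctr d (l+1) j) - f (ctr d l (par d l j))) * (μ (cell d (l+1) j)).toReal
        = (f (ctr d (l+1) j) - f (ctr d l (par d l j)))
            * ((ν (cell d (l+1) j)).toReal - (μ (cell d (l+1) j)).toReal) :=
      fun j => (mul_sub _ _ _).symm
    calc |∑ j : Fin d → Fin (2^(l+1)), _|
        ≤ ∑ j : Fin d → Fin (2^(l+1)),
            |(f (ctr d (l+1) j) - f (ctr d l (par d l j)))
              * ((ν (cell d (l+1) j)).toReal - (μ (cell d (l+1) j)).toReal)| := by
          rw [Finset.sum_congr rfl (fun j _ => heq j)]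
          exact Finset.abs_sum_le_sum_abs _ _
      _ ≤ ∑ j : Fin d → Fin (2^(l+1)),
            Real.sqrt d / 2^(l+2)
              * |(ν (cell d (l+1) j)).toReal - (μ (cell d (l+1) j)).toReal| := by
          apply Finset.sum_le_sum
          intro j _
          rw [abs_mul]
          apply mul_le_mul_of_nonneg_right _ (abs_nonneg _)
          have h1 : dist (f (ctr d (l+1) j)) (f (ctr d l (par d l j)))
              ≤ 1 * dist (ctr d (l+1) j) (ctr d l (par d l j)) := hf.dist_le_mul _ _
          rw [one_mul] at h1
          calc |f (ctr d (l+1) j) - f (ctr d l (par d l j))|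
              = dist (f (ctr d (l+1) j)) (f (ctr d l (par d l j))) := (Real.dist_eq _ _).symm
            _ ≤ dist (ctr d (l+1) j) (ctr d l (par d l j)) := h1
            _ ≤ Real.sqrt d / 2^(l+2) := dist_ctr_par l j
      _ = Real.sqrt d / 2^(l+2) * Dfn d ν μ (l+1) := by
          rw [Dfn, Finset.mul_sum]
  calc |∫ x, f x ∂ν - ∫ x, f x ∂μ|
      ≤ |∫ x, f x ∂ν - Afn d f ν L| + |∫ x, f x ∂μ - Afn d f μ L|
        + ∑ l ∈ Finset.range L,
            |(Afn d f ν (l+1) - Afn d f ν l) - (Afn d f μ (l+1) - Afn d f μ l)| := by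
        rw [hdecomp]
        refine (abs_add_le _ _).trans ?_
        gcongr
        · exact (abs_sub _ _).trans (le_refl _)
        · exact Finset.abs_sum_le_sum_abs _ _
    _ ≤ Real.sqrt d / 2^(L+1) + Real.sqrt d / 2^(L+1)
        + ∑ l ∈ Finset.range L, Real.sqrt d / 2^(l+2) * Dfn d ν μ (l+1) := by
        gcongr
        · exact Afn_approx f hf ν hν L
        · exact Afn_approx f hf μ hμ L
        · exact hstepb _
    _ = Real.sqrt d * (1/2^L + ∑ l ∈ Finset.range L, 1/2^(l+2) * Dfn d ν μ (l+1)) := by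
        rw [mul_add, Finset.mul_sum]
        congr 1
        · rw [show (L+1) = L+1 from rfl]; field_simp; ring
        · exact Finset.sum_congr rfl fun l _ => by ring


section Prob

variable {Ω : Type*} [MeasurableSpace Ω] (P : Measure Ω) [IsProbabilityMeasure P]

lemma sq_integral_abs_le (W : Ω → ℝ) (hW : Integrable W P)
    (hW2 : Integrable (fun ω => W ω^2) P) :
    (∫ ω, |W ω| ∂P)^2 ≤ ∫ ω, W ω^2 ∂P := by
  set a := ∫ ω, |W ω| ∂P with ha
  have h1 : 0 ≤ ∫ ω, (|W ω| - a)^2 ∂P := integral_nonneg fun ω => sq_nonneg _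
  have he : (fun ω => (|W ω| - a)^2) = fun ω => W ω^2 - 2*a*|W ω| + a^2 := by
    funext ω
    have hsq : |W ω|^2 = W ω^2 := sq_abs _
    nlinarith [hsq]
  rw [he] at h1
  have hint2 : Integrable (fun ω => 2*a*|W ω|) P := (hW.abs).const_mul (2*a)
  have hint1 : Integrable (fun ω => W ω^2 - 2*a*|W ω|) P := hW2.sub hint2
  rw [integral_add hint1 (integrable_const _),
    integral_sub hW2 hint2, integral_const_mul, integral_const,
    probReal_univ, smul_eq_mul, one_mul] at h1
  nlinarith [h1]

lemma exp_abs_le {d : ℕ} (μ : Measure (EuclideanSpace ℝ (Fin d))) [IsProbabilityMeasure μ]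
    (X : ℕ → Ω → EuclideanSpace ℝ (Fin d)) (hmeas : ∀ k, Measurable (X k))
    (hindep : iIndepFun X P)
    (hlaw : ∀ k, Measure.map (X k) P = μ) (n : ℕ) (hn : 1 ≤ n)
    {Q : Set (EuclideanSpace ℝ (Fin d))} (hQ : MeasurableSet Q) :
    ∫ ω, |(empMeasure X n ω Q).toReal - (μ Q).toReal| ∂P
      ≤ Real.sqrt ((μ Q).toReal / n) := by
  set p := (μ Q).toReal with hp
  have hp0 : 0 ≤ p := ENNReal.toReal_nonneg
  have hp1 : p ≤ 1 := by
    rw [hp]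
    exact ENNReal.toReal_le_of_le_ofReal zero_le_one (by simpa using prob_le_one (μ := μ) (s := Q))
  set Z : ℕ → Ω → ℝ := fun k ω => Q.indicator (fun _ => (1:ℝ)) (X k ω) with hZ
  have hZm : ∀ k, Measurable (Z k) := fun k => (measurable_const.indicator hQ).comp (hmeas k)
  have hZ01 : ∀ k ω, Z k ω = 0 ∨ Z k ω = 1 := by
    intro k ω
    by_cases h : X k ω ∈ Q
    · right; simp [hZ, Set.indicator_of_mem h]
    · left; simp [hZ, Set.indicator_of_notMem h]
  have hZabs : ∀ k ω, |Z k ω - p| ≤ 1 + |p| := by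
    intro k ω
    refine (abs_sub _ _).trans (add_le_add ?_ le_rfl)
    rcases hZ01 k ω with h | h <;> rw [h] <;> norm_num
  have hZint : ∀ k, Integrable (Z k) P := by
    intro k
    apply (integrable_const (1:ℝ)).mono' (hZm k).aestronglyMeasurable
    filter_upwards with ω
    rcases hZ01 k ω with h | h <;> rw [h] <;> norm_num
  have hCint : ∀ k, Integrable (fun ω => Z k ω - p) P := fun k => (hZint k).sub (integrable_const p)
  have hEZ : ∀ k, ∫ ω, Z k ω ∂P = p := by
    intro k
    have hg : AEStronglyMeasurable (fun x => Q.indicator (fun _ => (1:ℝ)) x)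
        (Measure.map (X k) P) := (measurable_const.indicator hQ).aestronglyMeasurable
    calc ∫ ω, Z k ω ∂P
        = ∫ x, Q.indicator (fun _ => (1:ℝ)) x ∂(Measure.map (X k) P) :=
          (integral_map (hmeas k).aemeasurable hg).symm
      _ = p := by rw [hlaw k, integral_indicator_const (1:ℝ) hQ, smul_eq_mul, mul_one, measureReal_def]
  have hEC : ∀ k, ∫ ω, (Z k ω - p) ∂P = 0 := by
    intro k
    rw [integral_sub (hZint k) (integrable_const p), hEZ k, integral_const, probReal_univ,
      one_smul, sub_self]
  have hPint : ∀ k k', Integrable (fun ω => (Z k ω - p) * (Z k' ω - p)) P := by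
    intro k k'
    apply (integrable_const ((1+|p|)^2)).mono'
      (((hZm k).sub measurable_const).mul ((hZm k').sub measurable_const)).aestronglyMeasurable
    filter_upwards with ω
    rw [Real.norm_eq_abs]; change |(Z k ω - p) * (Z k' ω - p)| ≤ _; rw [abs_mul]
    have h1 := hZabs k ω
    have h2 := hZabs k' ω
    have := abs_nonneg (Z k ω - p)
    have := abs_nonneg (Z k' ω - p)
    nlinarith
  have hcross : ∀ k k', k ≠ k' → ∫ ω, (Z k ω - p) * (Z k' ω - p) ∂P = 0 := by
    intro k k' hkk'
    have hφ : Measurable (fun x : EuclideanSpace ℝ (Fin d) => Q.indicator (fun _ => (1:ℝ)) x - p) :=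
      (measurable_const.indicator hQ).sub measurable_const
    have hind : IndepFun (fun ω => Z k ω - p) (fun ω => Z k' ω - p) P :=
      (hindep.indepFun hkk').comp hφ hφ
    have := hind.integral_mul_eq_mul_integral (hCint k).aestronglyMeasurable (hCint k').aestronglyMeasurable
    calc ∫ ω, (Z k ω - p) * (Z k' ω - p) ∂P
        = ∫ ω, ((fun ω => Z k ω - p) * (fun ω => Z k' ω - p)) ω ∂P := rfl
      _ = (∫ ω, (Z k ω - p) ∂P) * ∫ ω, (Z k' ω - p) ∂P := this
      _ = 0 := by rw [hEC k, hEC k', mul_zero]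
  have hdiag : ∀ k, ∫ ω, (Z k ω - p) * (Z k ω - p) ∂P = p - p^2 := by
    intro k
    have he : (fun ω => (Z k ω - p) * (Z k ω - p)) = fun ω => Z k ω - 2*p*Z k ω + p^2 := by
      funext ω
      rcases hZ01 k ω with h | h <;> rw [h] <;> ring
    have hint2 : Integrable (fun ω => 2*p*Z k ω) P := (hZint k).const_mul (2*p)
    have hint1 : Integrable (fun ω => Z k ω - 2*p*Z k ω) P := (hZint k).sub hint2
    rw [he, integral_add hint1 (integrable_const _),
      integral_sub (hZint k) hint2, integral_const_mul, hEZ k,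
      integral_const, probReal_univ, one_smul]
    ring
  set W : Ω → ℝ := fun ω => (∑ k ∈ Finset.Icc 1 n, Z k ω) / n - p with hW
  have hcard : (Finset.Icc 1 n).card = n := by rw [Nat.card_Icc]; omega
  have hn0 : (n:ℝ) ≠ 0 := by positivity
  have hWsum : ∀ ω, W ω = (1/n : ℝ) * ∑ k ∈ Finset.Icc 1 n, (Z k ω - p) := by
    intro ω
    rw [hW, Finset.sum_sub_distrib, Finset.sum_const, hcard]
    field_simp; rw [nsmul_eq_mul]
  have hWm : Measurable W := by
    apply Measurable.sub _ measurable_const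
    exact (Finset.measurable_sum _ (fun k _ => hZm k)).div_const _
  have hWbd : ∀ ω, |W ω| ≤ n * (1 + |p|) := by
    intro ω
    rw [hWsum ω, abs_mul]
    calc |(1/n:ℝ)| * |∑ k ∈ Finset.Icc 1 n, (Z k ω - p)|
        ≤ 1 * ∑ k ∈ Finset.Icc 1 n, |Z k ω - p| := by
          apply mul_le_mul _ (Finset.abs_sum_le_sum_abs _ _) (abs_nonneg _) zero_le_one
          rw [abs_of_pos (by positivity : (0:ℝ) < 1/n)]
          rw [div_le_one (by positivity)]
          exact_mod_cast hn
      _ ≤ 1 * ∑ _k ∈ Finset.Icc 1 n, (1 + |p|) := by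
          apply mul_le_mul_of_nonneg_left (Finset.sum_le_sum fun k _ => hZabs k ω) zero_le_one
      _ = n * (1 + |p|) := by rw [one_mul, Finset.sum_const, hcard, nsmul_eq_mul]
  have hWint : Integrable W P := by
    apply (integrable_const ((n:ℝ) * (1 + |p|))).mono' hWm.aestronglyMeasurable
    filter_upwards with ω
    exact (Real.norm_eq_abs _) ▸ hWbd ω
  have hW2int : Integrable (fun ω => W ω^2) P := by
    apply (integrable_const (((n:ℝ) * (1 + |p|))^2)).mono'
      (hWm.pow_const 2).aestronglyMeasurable
    filter_upwards with ω
    rw [Real.norm_eq_abs, abs_pow]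
    exact pow_le_pow_left₀ (abs_nonneg _) (hWbd ω) 2
  have hW2 : ∫ ω, W ω^2 ∂P ≤ p / n := by
    have he : (fun ω => W ω^2) = fun ω =>
        (1/n:ℝ)^2 * ∑ k ∈ Finset.Icc 1 n, ∑ k' ∈ Finset.Icc 1 n, (Z k ω - p) * (Z k' ω - p) := by
      funext ω
      rw [hWsum ω, mul_pow]
      congr 1
      rw [sq, Finset.sum_mul_sum]
    rw [he, integral_const_mul, integral_finset_sum _
      (fun k _ => integrable_finset_sum _ (fun k' _ => hPint k k'))]
    have hsum : ∀ k ∈ Finset.Icc 1 n,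
        ∫ ω, ∑ k' ∈ Finset.Icc 1 n, (Z k ω - p) * (Z k' ω - p) ∂P = p - p^2 := by
      intro k hk
      rw [integral_finset_sum _ (fun k' _ => hPint k k')]
      rw [Finset.sum_eq_single k]
      · exact hdiag k
      · intro k' _ hkk'
        exact hcross k k' (fun h => hkk' h.symm)
      · intro h; exact absurd hk h
    rw [Finset.sum_congr rfl hsum, Finset.sum_const, hcard, nsmul_eq_mul]
    have hpp : p - p^2 ≤ p := by nlinarith
    calc (1/n:ℝ)^2 * (n * (p - p^2)) ≤ (1/n:ℝ)^2 * (n * p) := by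
          apply mul_le_mul_of_nonneg_left _ (by positivity)
          exact mul_le_mul_of_nonneg_left hpp (by positivity)
      _ = p / n := by field_simp
  have hWabs : ∫ ω, |W ω| ∂P ≤ Real.sqrt (p / n) := by
    have h0 : 0 ≤ ∫ ω, |W ω| ∂P := integral_nonneg fun ω => abs_nonneg _
    have hpn : 0 ≤ p / n := by positivity
    rw [Real.le_sqrt h0 hpn]
    exact (sq_integral_abs_le P W hWint hW2int).trans hW2
  have hemp : ∀ ω, (empMeasure X n ω Q).toReal = (∑ k ∈ Finset.Icc 1 n, Z k ω) / n := by
    intro ω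
    have h1 : ∀ k, (Measure.dirac (X k ω) Q).toReal = Z k ω := by
      intro k
      rw [Measure.dirac_apply' _ hQ]
      by_cases h : X k ω ∈ Q
      · simp [Set.indicator_of_mem h, hZ]
      · simp [Set.indicator_of_notMem h, hZ]
    rw [empMeasure, Measure.smul_apply, smul_eq_mul, ENNReal.toReal_mul,
      Measure.finset_sum_apply, ENNReal.toReal_sum (fun k _ => measure_ne_top _ _),
      ENNReal.toReal_inv, ENNReal.toReal_natCast, Finset.sum_congr rfl (fun k _ => h1 k),
      inv_mul_eq_div]
  calc ∫ ω, |(empMeasure X n ω Q).toReal - p| ∂P = ∫ ω, |W ω| ∂P := by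
        congr 1
        funext ω
        rw [hemp ω, hW]
    _ ≤ Real.sqrt (p / n) := hWabs


lemma emp_toReal {d : ℕ} (X : ℕ → Ω → EuclideanSpace ℝ (Fin d)) (n : ℕ)
    {Q : Set (EuclideanSpace ℝ (Fin d))} (hQ : MeasurableSet Q) (ω : Ω) :
    (empMeasure X n ω Q).toReal
      = (∑ k ∈ Finset.Icc 1 n, Q.indicator (fun _ => (1:ℝ)) (X k ω)) / n := by
  have h1 : ∀ k, (Measure.dirac (X k ω) Q).toReal = Q.indicator (fun _ => (1:ℝ)) (X k ω) := by
    intro k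
    rw [Measure.dirac_apply' _ hQ]
    by_cases h : X k ω ∈ Q
    · simp [Set.indicator_of_mem h]
    · simp [Set.indicator_of_notMem h]
  rw [empMeasure, Measure.smul_apply, smul_eq_mul, ENNReal.toReal_mul,
    Measure.finset_sum_apply, ENNReal.toReal_sum (fun k _ => measure_ne_top _ _),
    ENNReal.toReal_inv, ENNReal.toReal_natCast, Finset.sum_congr rfl (fun k _ => h1 k),
    inv_mul_eq_div]

lemma integrable_emp_abs {d : ℕ} (μ : Measure (EuclideanSpace ℝ (Fin d)))
    (X : ℕ → Ω → EuclideanSpace ℝ (Fin d)) (hmeas : ∀ k, Measurable (X k))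
    (n : ℕ) (hn : 1 ≤ n) {Q : Set (EuclideanSpace ℝ (Fin d))} (hQ : MeasurableSet Q) :
    Integrable (fun ω => |(empMeasure X n ω Q).toReal - (μ Q).toReal|) P := by
  have hm : Measurable fun ω => (empMeasure X n ω Q).toReal := by
    have h : (fun ω => (empMeasure X n ω Q).toReal)
        = fun ω => (∑ k ∈ Finset.Icc 1 n, Q.indicator (fun _ => (1:ℝ)) (X k ω)) / n :=
      funext (emp_toReal X n hQ)
    rw [h]
    exact (Finset.measurable_sum _
      (fun k _ => (measurable_const.indicator hQ).comp (hmeas k))).div_const _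
  apply (integrable_const (1 + |(μ Q).toReal|)).mono'
    ((hm.sub measurable_const).abs).aestronglyMeasurable
  filter_upwards with ω
  rw [Real.norm_eq_abs, abs_abs]
  refine (abs_sub _ _).trans (add_le_add ?_ le_rfl)
  show |(empMeasure X n ω Q).toReal| ≤ 1; rw [emp_toReal X n hQ, abs_div, abs_of_nonneg (by positivity : (0:ℝ) ≤ (n:ℝ))]
  rw [div_le_one (by exact_mod_cast Nat.lt_of_lt_of_le Nat.zero_lt_one hn)]
  calc |∑ k ∈ Finset.Icc 1 n, Q.indicator (fun _ => (1:ℝ)) (X k ω)|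
      ≤ ∑ k ∈ Finset.Icc 1 n, |Q.indicator (fun _ => (1:ℝ)) (X k ω)| :=
        Finset.abs_sum_le_sum_abs _ _
    _ ≤ ∑ _k ∈ Finset.Icc 1 n, (1:ℝ) := by
        apply Finset.sum_le_sum
        intro k _
        by_cases h : X k ω ∈ Q
        · simp [Set.indicator_of_mem h]
        · simp [Set.indicator_of_notMem h]
    _ = n := by rw [Finset.sum_const, Nat.card_Icc, nsmul_eq_mul, mul_one]; norm_num

lemma E_Dfn {d : ℕ} (μ : Measure (EuclideanSpace ℝ (Fin d))) [IsProbabilityMeasure μ]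
    (X : ℕ → Ω → EuclideanSpace ℝ (Fin d)) (hmeas : ∀ k, Measurable (X k))
    (hindep : iIndepFun X P)
    (hlaw : ∀ k, Measure.map (X k) P = μ) (n : ℕ) (hn : 1 ≤ n) (m : ℕ) :
    ∫ ω, Dfn d (empMeasure X n ω) μ m ∂P
      ≤ Real.sqrt (((2:ℝ)^m)^d / n) := by
  have hint : ∀ j : Fin d → Fin (2^m), Integrable
      (fun ω => |(empMeasure X n ω (cell d m j)).toReal - (μ (cell d m j)).toReal|) P :=
    fun j => integrable_emp_abs P μ X hmeas n hn (measurableSet_cell m j)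
  have h1 : ∫ ω, Dfn d (empMeasure X n ω) μ m ∂P
      = ∑ j : Fin d → Fin (2^m),
          ∫ ω, |(empMeasure X n ω (cell d m j)).toReal - (μ (cell d m j)).toReal| ∂P := by
    rw [show (fun ω => Dfn d (empMeasure X n ω) μ m) = fun ω => ∑ j : Fin d → Fin (2^m),
        |(empMeasure X n ω (cell d m j)).toReal - (μ (cell d m j)).toReal| from rfl]
    exact integral_finset_sum _ fun j _ => hint j
  rw [h1]
  set q : (Fin d → Fin (2^m)) → ℝ := fun j => Real.sqrt ((μ (cell d m j)).toReal / n) with hq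
  have h2 : ∑ j : Fin d → Fin (2^m),
      ∫ ω, |(empMeasure X n ω (cell d m j)).toReal - (μ (cell d m j)).toReal| ∂P
      ≤ ∑ j : Fin d → Fin (2^m), q j :=
    Finset.sum_le_sum fun j _ =>
      exp_abs_le P μ X hmeas hindep hlaw n hn (measurableSet_cell m j)
  refine h2.trans ?_
  -- Cauchy--Schwarz
  have hsum1 : ∑ j : Fin d → Fin (2^m), (μ (cell d m j)).toReal = 1 := by
    rw [← ENNReal.toReal_sum (fun j _ => measure_ne_top _ _), sum_cell_eq_one μ m,
      ENNReal.toReal_one]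
  have hcard : (Fintype.card (Fin d → Fin (2^m)) : ℝ) = ((2:ℝ)^m)^d := by
    rw [Fintype.card_fun, Fintype.card_fin, Fintype.card_fin]
    push_cast
    ring
  have hq2 : ∑ j : Fin d → Fin (2^m), q j ^ 2 = 1 / n := by
    have : ∀ j : Fin d → Fin (2^m), q j ^ 2 = (μ (cell d m j)).toReal / n := by
      intro j
      rw [hq]
      exact Real.sq_sqrt (by positivity)
    rw [Finset.sum_congr rfl fun j _ => this j, ← Finset.sum_div, hsum1]
  have hcs := Finset.sum_mul_sq_le_sq_mul_sq Finset.univ (fun _ => (1:ℝ)) q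
  simp only [one_mul, one_pow] at hcs
  rw [Finset.sum_const, Finset.card_univ, nsmul_eq_mul, mul_one, hq2] at hcs
  have hqnn : 0 ≤ ∑ j : Fin d → Fin (2^m), q j :=
    Finset.sum_nonneg fun j _ => Real.sqrt_nonneg _
  rw [← Real.sqrt_sq hqnn]
  apply Real.sqrt_le_sqrt
  calc (∑ j : Fin d → Fin (2^m), q j)^2
      ≤ (Fintype.card (Fin d → Fin (2^m)) : ℝ) * (1/n) := hcs
    _ = ((2:ℝ)^m)^d / n := by rw [hcard]; ring

lemma emp_prob {d : ℕ} (X : ℕ → Ω → EuclideanSpace ℝ (Fin d)) (n : ℕ) (hn : 1 ≤ n) (ω : Ω) :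
    IsProbabilityMeasure (empMeasure X n ω) := by
  constructor
  rw [empMeasure, Measure.smul_apply, Measure.finset_sum_apply, smul_eq_mul]
  have h1 : ∀ k ∈ Finset.Icc 1 n, Measure.dirac (X k ω) Set.univ = 1 :=
    fun k _ => measure_univ
  rw [Finset.sum_congr rfl h1, Finset.sum_const, Nat.card_Icc, nsmul_eq_mul, mul_one]
  have h2 : (n + 1 - 1 : ℕ) = n := by omega
  rw [h2]
  exact ENNReal.inv_mul_cancel (by exact_mod_cast Nat.cast_ne_zero.mpr (by omega))
    (ENNReal.natCast_ne_top n)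

lemma emp_cube {d : ℕ} (X : ℕ → Ω → EuclideanSpace ℝ (Fin d)) (n : ℕ) (hn : 1 ≤ n) (ω : Ω)
    (hω : ∀ k ∈ Finset.Icc 1 n, X k ω ∈ unitCube d) :
    empMeasure X n ω (unitCube d) = 1 := by
  rw [empMeasure, Measure.smul_apply, Measure.finset_sum_apply, smul_eq_mul]
  have h1 : ∀ k ∈ Finset.Icc 1 n, Measure.dirac (X k ω) (unitCube d) = 1 :=
    fun k hk => Measure.dirac_apply_of_mem (hω k hk)
  rw [Finset.sum_congr rfl h1, Finset.sum_const, Nat.card_Icc, nsmul_eq_mul, mul_one]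
  have h2 : (n + 1 - 1 : ℕ) = n := by omega
  rw [h2]
  exact ENNReal.inv_mul_cancel (by exact_mod_cast Nat.cast_ne_zero.mpr (by omega))
    (ENNReal.natCast_ne_top n)

lemma ae_good {d : ℕ} (μ : Measure (EuclideanSpace ℝ (Fin d))) [IsProbabilityMeasure μ]
    (hμ : μ (unitCube d) = 1)
    (X : ℕ → Ω → EuclideanSpace ℝ (Fin d)) (hmeas : ∀ k, Measurable (X k))
    (hlaw : ∀ k, Measure.map (X k) P = μ) (n : ℕ) :
    ∀ᵐ ω ∂P, ∀ k ∈ Finset.Icc 1 n, X k ω ∈ unitCube d := by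
  rw [Finset.eventually_all]
  intro k _
  rw [ae_iff]
  have h1 : {ω | ¬ X k ω ∈ unitCube d} = X k ⁻¹' (unitCube d)ᶜ := rfl
  rw [h1, ← Measure.map_apply (hmeas k) measurableSet_unitCube.compl, hlaw k]
  have h2 := measure_compl (μ := μ) measurableSet_unitCube (measure_ne_top μ _)
  rw [hμ, measure_univ] at h2
  simp at h2; exact h2


lemma key_bound {d : ℕ} (μ : Measure (EuclideanSpace ℝ (Fin d))) [IsProbabilityMeasure μ]
    (hμ : μ (unitCube d) = 1)
    (X : ℕ → Ω → EuclideanSpace ℝ (Fin d)) (hmeas : ∀ k, Measurable (X k))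
    (hindep : iIndepFun X P)
    (hlaw : ∀ k, Measure.map (X k) P = μ) (n : ℕ) (hn : 1 ≤ n) (L : ℕ) :
    ∫ ω, W1 (empMeasure X n ω) μ ∂P
      ≤ Real.sqrt d * (1/2^L
          + ∑ l ∈ Finset.range L, 1/2^(l+2) * Real.sqrt (((2:ℝ)^(l+1))^d / n)) := by
  have hDint : ∀ m, Integrable (fun ω => Dfn d (empMeasure X n ω) μ m) P := by
    intro m
    exact integrable_finset_sum _
      (fun j _ => integrable_emp_abs P μ X hmeas n hn (measurableSet_cell m j))
  have hSint : Integrable (fun ω => ∑ l ∈ Finset.range L,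
      1/2^(l+2) * Dfn d (empMeasure X n ω) μ (l+1)) P :=
    integrable_finset_sum _ (fun l _ => (hDint (l+1)).const_mul _)
  have hGint : Integrable (fun ω => Real.sqrt d * (1/2^L
      + ∑ l ∈ Finset.range L, 1/2^(l+2) * Dfn d (empMeasure X n ω) μ (l+1))) P :=
    ((integrable_const _).add hSint).const_mul _
  have h1 : ∫ ω, W1 (empMeasure X n ω) μ ∂P
      ≤ ∫ ω, Real.sqrt d * (1/2^L
          + ∑ l ∈ Finset.range L, 1/2^(l+2) * Dfn d (empMeasure X n ω) μ (l+1)) ∂P := by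
    apply integral_mono_of_nonneg _ hGint
    · filter_upwards [ae_good P μ hμ X hmeas hlaw n] with ω hω
      haveI := emp_prob X n hn ω
      exact det_bound d _ μ (emp_cube X n hn ω hω) hμ L
    · filter_upwards with ω
      exact Real.iSup_nonneg fun f => abs_nonneg _
  refine h1.trans ?_
  rw [integral_const_mul, integral_add (integrable_const _) hSint, integral_const,
    probReal_univ, smul_eq_mul, one_mul,
    integral_finset_sum _ (fun l _ => (hDint (l+1)).const_mul _)]
  apply mul_le_mul_of_nonneg_left _ (Real.sqrt_nonneg _)
  apply add_le_add le_rfl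
  apply Finset.sum_le_sum
  intro l _
  rw [integral_const_mul]
  exact mul_le_mul_of_nonneg_left
    (E_Dfn P μ X hmeas hindep hlaw n hn (l+1)) (by positivity)

lemma num63 : Real.sqrt 3 * (2 + Real.sqrt 2) ≤ 6.3 := by
  have h2 : Real.sqrt 2 ≤ 1.4143 := by
    nlinarith [Real.sq_sqrt (by norm_num : (0:ℝ) ≤ 2), Real.sqrt_nonneg 2]
  have h3 : Real.sqrt 3 ≤ 1.7321 := by
    nlinarith [Real.sq_sqrt (by norm_num : (0:ℝ) ≤ 3), Real.sqrt_nonneg 3]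
  nlinarith [Real.sqrt_nonneg 3, Real.sqrt_nonneg 2]

lemma le_of_sq_le_sq' {a b : ℝ} (ha : 0 ≤ a) (hb : 0 ≤ b) (h : a^2 ≤ b^2) : a ≤ b := by
  nlinarith

lemma geo_le {ρ : ℝ} (hρ : 1 < ρ) (L : ℕ) :
    ∑ l ∈ Finset.range L, ρ^(l+1) ≤ ρ^(L+1)/(ρ - 1) := by
  have h1 : ∑ l ∈ Finset.range L, ρ^(l+1) = ρ * ∑ l ∈ Finset.range L, ρ^l := by
    rw [Finset.mul_sum]
    exact Finset.sum_congr rfl fun l _ => by rw [pow_succ]; ring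
  rw [h1, geom_sum_eq (ne_of_gt hρ) L, ← mul_div_assoc]
  rw [div_le_div_iff₀ (by linarith) (by linarith)]
  have hρL : 0 ≤ ρ^L := by positivity
  calc ρ * (ρ^L - 1) * (ρ - 1) ≤ ρ * ρ^L * (ρ - 1) := by nlinarith
    _ = ρ^(L+1) * (ρ - 1) := by rw [pow_succ]; ring

lemma sum_geo_eq (d L n : ℕ) (hn : 1 ≤ n) :
    ∑ l ∈ Finset.range L, 1/2^(l+2) * Real.sqrt (((2:ℝ)^(l+1))^d / n)
      = (∑ l ∈ Finset.range L, ((Real.sqrt 2)^d / 2)^(l+1)) / (2 * Real.sqrt n) := by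
  have hsn : (0:ℝ) < Real.sqrt n := Real.sqrt_pos.mpr (by
    have : (0:ℝ) < n := by exact_mod_cast hn
    linarith)
  rw [Finset.sum_div]
  refine Finset.sum_congr rfl fun l _ => ?_
  have hsqd : Real.sqrt (((2:ℝ)^(l+1))^d) = ((Real.sqrt 2)^d)^(l+1) := by
    have h1 : (((Real.sqrt 2)^d)^(l+1))^2 = ((2:ℝ)^(l+1))^d := by
      rw [← pow_mul, ← pow_mul, show d*((l+1)*2) = 2*((l+1)*d) by ring, pow_mul,
        Real.sq_sqrt (by norm_num : (0:ℝ) ≤ 2), ← pow_mul, mul_comm (l+1) d, pow_mul]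
    rw [← h1, Real.sqrt_sq (by positivity)]
  rw [Real.sqrt_div (by positivity) _, hsqd, div_pow]
  have h2l : (0:ℝ) < 2^(l+1) := by positivity
  have h22 : (0:ℝ) < 2^(l+2) := by positivity
  field_simp
  ring

end Prob

end EmpW1

set_option maxHeartbeats 1000000 in
/-- For `d ≥ 3`, `μ` a probability measure on `[0,1]^d ⊆ ℝ^d` and `(X_k)`
i.i.d. of law `μ`, for every `n ≥ 1`, `E[W₁(μ̂_n, μ)] ≤ C_d · n^{-1/d}` where `C₃ = 6.3`
and `C_d = 3√d` for `d ≥ 4`. -/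
theorem empirical_W1_high_dim
    {Ω : Type*} [MeasurableSpace Ω] (P : Measure Ω) [IsProbabilityMeasure P]
    (d : ℕ) (hd : 3 ≤ d)
    (μ : Measure (EuclideanSpace ℝ (Fin d))) [IsProbabilityMeasure μ]
    (hμ : μ (unitCube d) = 1)
    (X : ℕ → Ω → EuclideanSpace ℝ (Fin d)) (hmeas : ∀ k, Measurable (X k))
    (hindep : iIndepFun X P)
    (hlaw : ∀ k, Measure.map (X k) P = μ)
    (n : ℕ) (hn : 1 ≤ n) :
    ∫ ω, W1 (empMeasure X n ω) μ ∂P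
      ≤ (if d = 3 then (6.3 : ℝ) else 3 * Real.sqrt d) * (n : ℝ) ^ (-(1 : ℝ) / d) := by
  classical
  open EmpW1 in
  have hd0 : (0:ℝ) < d := by exact_mod_cast (by omega : 0 < d)
  have hn0 : (0:ℝ) < n := by exact_mod_cast hn
  have hs2 : Real.sqrt 2 ^ 2 = 2 := Real.sq_sqrt (by norm_num)
  have hs_pos : 0 < Real.sqrt 2 := Real.sqrt_pos.mpr (by norm_num)
  have hs1 : 1 < Real.sqrt 2 := by nlinarith
  have hsle : Real.sqrt 2 ≤ 1.4143 := by nlinarith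
  set β := (n:ℝ) ^ ((1:ℝ)/d) with hβ
  have hβpos : 0 < β := Real.rpow_pos_of_pos hn0 _
  have hβd : β ^ d = n := by
    rw [hβ, ← Real.rpow_natCast ((n:ℝ) ^ ((1:ℝ)/d)) d, ← Real.rpow_mul (le_of_lt hn0),
      one_div, inv_mul_cancel₀ (ne_of_gt hd0), Real.rpow_one]
  have hRHS : (n:ℝ) ^ (-(1:ℝ)/d) = β⁻¹ := by
    rw [neg_div, Real.rpow_neg (le_of_lt hn0), hβ]
  have hsn : Real.sqrt n > 0 := Real.sqrt_pos.mpr hn0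
  have hsnsq : Real.sqrt n ^ 2 = n := Real.sq_sqrt (le_of_lt hn0)
  by_cases hd3 : d = 3
  · subst hd3
    rw [if_pos rfl, hRHS]
    set s := Real.sqrt 2 with hs
    set L := (Nat.clog 2 n + 2)/3 with hL
    -- natural-number facts
    have hnat1 : n ≤ 2^(3*L) := by
      calc n ≤ 2^(Nat.clog 2 n) := Nat.le_pow_clog one_lt_two n
        _ ≤ 2^(3*L) := Nat.pow_le_pow_right (by norm_num) (by omega)
    have hβ2L : β ≤ 2^L := by
      have h1 : (n:ℝ) ≤ ((2:ℝ)^L)^3 := by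
        rw [← pow_mul, mul_comm L 3]
        exact_mod_cast Nat.cast_le.mpr hnat1
      have h2 : β^3 ≤ ((2:ℝ)^L)^3 := by rw [hβd]; exact h1
      exact le_of_pow_le_pow_left₀ (by norm_num) (by positivity) h2
    have hterm1 : 1/(2:ℝ)^L ≤ 1/β := by
      apply one_div_le_one_div_of_le hβpos hβ2L
    have hsL : s^(L+1) ≤ 2 * Real.sqrt n / β := by
      rcases Nat.eq_zero_or_pos L with hL0 | hLpos
      · -- then n = 1
        have hn1 : n = 1 := by
          by_contra h
          have h2 : 2 ≤ n := by omega
          have h3 := Nat.clog_pos one_lt_two h2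
          omega
        subst hn1
        rw [hL0]
        have hβ1 : β = 1 := by
          rw [hβ]
          norm_num
        rw [hβ1]
        norm_num
        nlinarith [hs2, hs_pos, hsle]
      · have hn2 : 2 ≤ n := by
          by_contra h
          have hn1 : n = 1 := by omega
          rw [hn1, Nat.clog_one_right] at hL
          omega
        have hnat2 : 2^(3*(L-1)) ≤ n := by
          have hc1 : 1 < n := by omega
          have h1 := Nat.pow_pred_clog_lt_self one_lt_two hc1
          rw [Nat.pred_eq_sub_one] at h1
          have hc2 : 1 ≤ Nat.clog 2 n := Nat.clog_pos one_lt_two hn2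
          have h2 : 3*(L-1) ≤ Nat.clog 2 n - 1 := by omega
          calc 2^(3*(L-1)) ≤ 2^(Nat.clog 2 n - 1) := Nat.pow_le_pow_right (by norm_num) h2
            _ ≤ n := le_of_lt h1
        have h2Lβ : (2:ℝ)^(L-1) ≤ β := by
          have h1 : ((2:ℝ)^(L-1))^3 ≤ (n:ℝ) := by
            rw [← pow_mul, mul_comm (L-1) 3]
            exact_mod_cast Nat.cast_le.mpr hnat2
          have h2 : ((2:ℝ)^(L-1))^3 ≤ β^3 := by rw [hβd]; exact h1
          exact le_of_pow_le_pow_left₀ (by norm_num) (le_of_lt hβpos) h2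
        apply le_of_sq_le_sq' (by positivity) (by positivity)
        have hsq1 : (s^(L+1))^2 = 2^(L+1) := by
          rw [← pow_mul, mul_comm (L+1) 2, pow_mul, hs2]
        have hsq2 : (2 * Real.sqrt n / β)^2 = 4 * n / β^2 := by
          rw [div_pow, mul_pow, hsnsq]
          norm_num
        rw [hsq1, hsq2]
        have hb3 : (n:ℝ) = β^3 := hβd.symm
        have h2L1 : (2:ℝ)^(L+1) = 4 * 2^(L-1) := by
          rw [show L+1 = (L-1)+2 by omega, pow_add]
          ring
        rw [h2L1, hb3]
        rw [show 4*β^3/β^2 = 4*β from by field_simp]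
        linarith [h2Lβ]
    -- final chain for d = 3
    have hkey := EmpW1.key_bound P μ hμ X hmeas hindep hlaw n hn L
    rw [EmpW1.sum_geo_eq 3 L n hn] at hkey
    have hsd : Real.sqrt 2 ^ 3 / 2 = s := by
      have h1 : Real.sqrt 2 ^ 3 = 2 * Real.sqrt 2 := by nlinarith [hs2]
      rw [h1]
      ring
    rw [hsd] at hkey
    have hsum : ∑ l ∈ Finset.range L, s^(l+1) ≤ s^(L+1) * (s+1) := by
      refine (EmpW1.geo_le hs1 L).trans ?_
      rw [div_le_iff₀ (by linarith : (0:ℝ) < s - 1)]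
      have hpL : 0 ≤ s^(L+1) := by positivity
      nlinarith [hs2, hpL]
    have h2sn : (0:ℝ) < 2 * Real.sqrt n := by positivity
    have hB : (∑ l ∈ Finset.range L, s^(l+1)) / (2*Real.sqrt n) ≤ (s+1)/β := by
      have h1 : (∑ l ∈ Finset.range L, s^(l+1)) ≤ (2*Real.sqrt n/β) * (s+1) := by
        refine hsum.trans ?_
        apply mul_le_mul_of_nonneg_right hsL (by linarith)
      rw [div_le_div_iff₀ h2sn hβpos]
      calc (∑ l ∈ Finset.range L, s^(l+1)) * β
          ≤ ((2*Real.sqrt n/β) * (s+1)) * β := mul_le_mul_of_nonneg_right h1 (le_of_lt hβpos)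
        _ = (s+1) * (2*Real.sqrt n) := by field_simp
    have h3nn : (0:ℝ) ≤ Real.sqrt 3 := Real.sqrt_nonneg 3
    refine hkey.trans ?_
    have hc : ((3:ℕ):ℝ) = 3 := by norm_num
    rw [hc]
    calc Real.sqrt 3 * (1/2^L + (∑ l ∈ Finset.range L, s^(l+1)) / (2*Real.sqrt n))
        ≤ Real.sqrt 3 * (1/β + (s+1)/β) :=
          mul_le_mul_of_nonneg_left (add_le_add hterm1 hB) h3nn
      _ = Real.sqrt 3 * (2+s) * β⁻¹ := by field_simp; ring
      _ ≤ 6.3 * β⁻¹ := by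
          rw [hs]
          exact mul_le_mul_of_nonneg_right EmpW1.num63 (inv_nonneg.mpr (le_of_lt hβpos))
  · -- case d ≥ 4
    rw [if_neg hd3, hRHS]
    have hd4 : 4 ≤ d := by omega
    set L := Nat.log 2 n / d with hL
    have hdm := Nat.div_add_mod (Nat.log 2 n) d
    rw [← hL] at hdm
    have hmod := Nat.mod_lt (Nat.log 2 n) (show 0 < d by omega)
    have hnat1 : 2^(L*d) ≤ n := by
      calc 2^(L*d) ≤ 2^(Nat.log 2 n) :=
            Nat.pow_le_pow_right (by norm_num) (Nat.div_mul_le_self _ _)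
        _ ≤ n := Nat.pow_log_le_self 2 (by omega)
    have hnat2 : n ≤ 2^((L+1)*d) := by
      have h1 : n < 2^(Nat.log 2 n + 1) := Nat.lt_pow_succ_log_self one_lt_two n
      have h2 : Nat.log 2 n + 1 ≤ (L+1)*d := by
        have h5 : Nat.log 2 n < (L+1)*d := by
          calc Nat.log 2 n = d*L + Nat.log 2 n % d := hdm.symm
            _ < d*L + d := Nat.add_lt_add_left hmod _
            _ = (L+1)*d := by ring
        exact h5
      exact le_of_lt (lt_of_lt_of_le h1 (Nat.pow_le_pow_right (by norm_num) h2))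
    have h2Lβ : (2:ℝ)^L ≤ β := by
      have h1 : ((2:ℝ)^L)^d ≤ (n:ℝ) := by
        rw [← pow_mul]
        exact_mod_cast Nat.cast_le.mpr hnat1
      have h2 : ((2:ℝ)^L)^d ≤ β^d := by rw [hβd]; exact h1
      exact le_of_pow_le_pow_left₀ (by omega) (le_of_lt hβpos) h2
    have hβ2L : β ≤ 2^(L+1) := by
      have h1 : (n:ℝ) ≤ ((2:ℝ)^(L+1))^d := by
        rw [← pow_mul]
        exact_mod_cast Nat.cast_le.mpr hnat2
      have h2 : β^d ≤ ((2:ℝ)^(L+1))^d := by rw [hβd]; exact h1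
      exact le_of_pow_le_pow_left₀ (by omega) (by positivity) h2
    have hterm1 : 1/(2:ℝ)^L ≤ 2/β := by
      rw [div_le_div_iff₀ (by positivity) hβpos]
      calc 1 * β = β := one_mul β
        _ ≤ 2^(L+1) := hβ2L
        _ = 2 * 2^L := by ring
    set ρ := (Real.sqrt 2)^d / 2 with hρ
    have hs4 : (Real.sqrt 2)^4 = 4 := by
      have h := pow_mul (Real.sqrt 2) 2 2
      rw [hs2] at h
      norm_num at h
      exact h
    have hρ2 : 2 ≤ ρ := by
      rw [hρ, le_div_iff₀ (by norm_num : (0:ℝ) < 2)]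
      calc (2:ℝ)*2 = 4 := by norm_num
        _ = (Real.sqrt 2)^4 := hs4.symm
        _ ≤ (Real.sqrt 2)^d := pow_le_pow_right₀ (le_of_lt hs1) hd4
    have hρ1 : 1 < ρ := by linarith
    have hρpos : 0 < ρ := by linarith
    have hgeo2 : ∑ l ∈ Finset.range L, ρ^(l+1) ≤ 2 * ρ^L := by
      refine (EmpW1.geo_le hρ1 L).trans ?_
      rw [div_le_iff₀ (by linarith : (0:ℝ) < ρ - 1), pow_succ]
      have hρL : 0 ≤ ρ^L := by positivity
      linarith [mul_nonneg hρL (by linarith : (0:ℝ) ≤ ρ - 2)]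
    have ha : (0:ℝ) < (2:ℝ)^L := by positivity
    have hρLb : ρ^L ≤ Real.sqrt n / β := by
      apply EmpW1.le_of_sq_le_sq' (by positivity) (by positivity)
      have h : (ρ^L * (2:ℝ)^L)^2 = ((2:ℝ)^L)^d := by
        rw [← mul_pow, hρ, div_mul_cancel₀ _ (two_ne_zero)]
        calc ((Real.sqrt 2^d)^L)^2 = Real.sqrt 2^(d*L*2) := by
              rw [← pow_mul, ← pow_mul, mul_assoc]
          _ = (Real.sqrt 2^2)^(d*L) := by rw [← pow_mul, mul_comm 2 (d*L)]
          _ = 2^(d*L) := by rw [hs2]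
          _ = ((2:ℝ)^L)^d := by rw [← pow_mul, mul_comm d L]
      have hsplit : ((2:ℝ)^L)^d = ((2:ℝ)^L)^2 * ((2:ℝ)^L)^(d-2) := by
        rw [← pow_add]
        congr 1
        omega
      have hρL2 : (ρ^L)^2 = ((2:ℝ)^L)^(d-2) := by
        rw [mul_pow, hsplit] at h
        have h2 : ((2:ℝ)^L)^2 ≠ 0 := by positivity
        exact mul_right_cancel₀ h2 (by linarith [h] : (ρ^L)^2 * ((2:ℝ)^L)^2
          = ((2:ℝ)^L)^(d-2) * ((2:ℝ)^L)^2)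
      rw [hρL2, div_pow, hsnsq, le_div_iff₀ (by positivity : (0:ℝ) < β^2)]
      calc ((2:ℝ)^L)^(d-2) * β^2 ≤ β^(d-2) * β^2 := by
            apply mul_le_mul_of_nonneg_right (pow_le_pow_left₀ (le_of_lt ha) h2Lβ _)
              (by positivity)
        _ = β^d := by rw [← pow_add]; congr 1; omega
        _ = n := hβd
    have hkey := EmpW1.key_bound P μ hμ X hmeas hindep hlaw n hn L
    rw [EmpW1.sum_geo_eq d L n hn, ← hρ] at hkey
    have h2sn : (0:ℝ) < 2 * Real.sqrt n := by positivity
    have hB : (∑ l ∈ Finset.range L, ρ^(l+1)) / (2*Real.sqrt n) ≤ 1/β := by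
      have h1 : (∑ l ∈ Finset.range L, ρ^(l+1)) ≤ 2 * (Real.sqrt n/β) :=
        hgeo2.trans (by apply mul_le_mul_of_nonneg_left hρLb (by norm_num))
      rw [div_le_div_iff₀ h2sn hβpos]
      calc (∑ l ∈ Finset.range L, ρ^(l+1)) * β
          ≤ (2 * (Real.sqrt n/β)) * β := mul_le_mul_of_nonneg_right h1 (le_of_lt hβpos)
        _ = 1 * (2*Real.sqrt n) := by field_simp
    refine hkey.trans ?_
    calc Real.sqrt d * (1/2^L + (∑ l ∈ Finset.range L, ρ^(l+1)) / (2*Real.sqrt n))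
        ≤ Real.sqrt d * (2/β + 1/β) :=
          mul_le_mul_of_nonneg_left (add_le_add hterm1 hB) (Real.sqrt_nonneg _)
      _ = 3 * Real.sqrt d * β⁻¹ := by field_simp; ring
end
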